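/- For the weakly asymmetric random walk with parameter c > 0 started from ⌊αN⌋ with 0 < α < 1, for every β with 0 < β ≤ 1, the probability P_{⌊αN⌋}(R_N ≥ βN) converges as N → ∞ to: 1 if β ≤ min(α,1−α); (1−e^{−4cα})/(1−e^{−4cβ}) if α ≤ β ≤ 1−α; (1−e^{4c(1−α)})/(1−e^{4cβ}) if 1−α ≤ β ≤ α; and e^{−4αc}(e^{4c(1−β)}−1)/(1−e^{−4cβ}) if max(α,1−α) ≤ β ≤ 1. -/

import Mathlib

open Filter Topology

/-- Position of the nearest-neighbor walk after the steps `w` (`true` = one step right,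
`false` = one step left), started from `x`. -/
def walkPos (x : ℤ) (w : List Bool) : ℤ :=
  x + (w.count true : ℤ) - (w.count false : ℤ)

/-- `w` is the step sequence of a trajectory on `{0, 1, …, N}` started at `x` and run
exactly until the exit time `τ_N = T_0 ∧ T_N`: all positions strictly before the last
step lie strictly inside `(0, N)`, and the final position is `0` or `N`. -/
def IsExitPath (N : ℕ) (x : ℤ) (w : List Bool) : Prop :=
  (∀ k < w.length, 0 < walkPos x (w.take k) ∧ walkPos x (w.take k) < (N : ℤ)) ∧
    (walkPos x w = 0 ∨ walkPos x w = (N : ℤ))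

/-- Probability weight of the step sequence `w` when each step goes right with
probability `p` and left with probability `1 - p`, independently. -/
noncomputable def wt (p : ℝ) (w : List Bool) : ℝ :=
  p ^ w.count true * (1 - p) ^ w.count false

/-- `prob N p x S` is the probability, for the walk on `{0, …, N}` with right-step
probability `p` started at `x` and stopped at the exit time `τ_N`, that its stopped
trajectory (recorded as the step sequence up to time `τ_N`) satisfies `S`. -/
noncomputable def prob (N : ℕ) (p : ℝ) (x : ℤ) (S : List Bool → Prop) : ℝ :=
  ∑' w : List Bool, Set.indicator {w | IsExitPath N x w ∧ S w} (wt p) w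

/-- Expectation of `f` of the stopped trajectory for the walk started at `x`. -/
noncomputable def expect (N : ℕ) (p : ℝ) (x : ℤ) (f : List Bool → ℝ) : ℝ :=
  ∑' w : List Bool, Set.indicator {w | IsExitPath N x w} (fun w => wt p w * f w) w

/-- Probability for the walk whose starting point is uniformly distributed on
`{0, 1, …, N}`; the event `S` may depend on the starting point. -/
noncomputable def probUniform (N : ℕ) (p : ℝ) (S : ℤ → List Bool → Prop) : ℝ :=
  (∑ x ∈ Finset.range (N + 1), prob N p (x : ℤ) (S (x : ℤ))) / (N + 1)

/-- The set of sites visited by the stopped walk up to time `τ_N` (time `0` included). -/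
def rangeSet (x : ℤ) (w : List Bool) : Finset ℤ :=
  (Finset.range (w.length + 1)).image fun k => walkPos x (w.take k)

/-- The range `R_N`: the number of distinct sites visited up to the exit time. -/
def rangeCount (x : ℤ) (w : List Bool) : ℕ := (rangeSet x w).card

/-- The local time `G(y) = Σ_{k=0}^{τ_N} 1_{X_k = y}` of the stopped trajectory `w`. -/
def localTime (x y : ℤ) (w : List Bool) : ℕ :=
  ((Finset.range (w.length + 1)).filter fun k => walkPos x (w.take k) = y).card

/-- The event `T_y < τ_N`: the walk started at `x` visits `y` at some time
`k ≥ 1` strictly before the end of the stopped trajectory `w`. -/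
def hitsBefore (x y : ℤ) (w : List Bool) : Prop :=
  ∃ k, 1 ≤ k ∧ k < w.length ∧ walkPos x (w.take k) = y

/-!
The range of the stopped walk is an integer interval containing the starting point `x` and the
exit point `0` or `N`. Hence, with `a = k - 1` and `b = N + 1 - k`, the event `R_N ≥ k` is,
according to the position of `x` relative to `a` and `b`, the sure event, the event that `a` is
visited, the event that `b` is visited, or the intersection of the last two, whose union is then
sure. Visiting probabilities are gambler's ruin probabilities: they solve the discrete Dirichlet
problem of the walk, whose solutions are affine in `ρ ^ y` with `ρ = q_N / p_N`. Since
`ρ_N ^ (γ N) → exp (-4 c γ)`, the four regimes give the four limits, which agree where the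
regimes meet.
-/

def stepSize (b : Bool) : ℤ := if b then 1 else -1

@[simp] lemma stepSize_true : stepSize true = 1 := rfl

@[simp] lemma stepSize_false : stepSize false = -1 := rfl

lemma walkPos_nil (x : ℤ) : walkPos x [] = x := by simp [walkPos]

lemma walkPos_cons (x : ℤ) (b : Bool) (w : List Bool) :
    walkPos x (b :: w) = walkPos (x + stepSize b) w := by
  cases b <;> simp [walkPos] <;> ring

section ExitPath

variable {N : ℕ} {x : ℤ} {w : List Bool}

lemma isExitPath_nil_iff : IsExitPath N x [] ↔ x = 0 ∨ x = N := by
  simp [IsExitPath, walkPos_nil]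

lemma isExitPath_cons_iff (hx0 : 0 < x) (hxN : x < N) (b : Bool) :
    IsExitPath N x (b :: w) ↔ IsExitPath N (x + stepSize b) w := by
  simp only [IsExitPath, List.length_cons, walkPos_cons, and_congr_left_iff]
  intro _
  constructor
  · intro h k hk
    simpa [walkPos_cons] using h (k + 1) (by omega)
  · rintro h (_ | k) hk
    · simpa [walkPos_nil] using ⟨hx0, hxN⟩
    · simpa [walkPos_cons] using h k (by omega)

lemma IsExitPath.eq_nil (h : IsExitPath N x w) (hx : ¬ (0 < x ∧ x < N)) : w = [] := by
  cases w with
  | nil => rfl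
  | cons b w => exact absurd (by simpa [walkPos_nil] using h.1 0 (by simp)) hx

lemma IsExitPath.walkPos_take_mem_Icc (h : IsExitPath N x w) {k : ℕ} (hk : k ≤ w.length) :
    walkPos x (w.take k) ∈ Finset.Icc 0 (N : ℤ) := by
  rw [Finset.mem_Icc]
  rcases hk.lt_or_eq with hk | rfl
  · exact ⟨(h.1 k hk).1.le, (h.1 k hk).2.le⟩
  · rw [List.take_length]
    rcases h.2 with h0 | hN <;> omega

end ExitPath

lemma rangeSet_nil (x : ℤ) : rangeSet x [] = {x} := by
  simp [rangeSet, walkPos_nil]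

lemma rangeSet_cons (x : ℤ) (b : Bool) (w : List Bool) :
    rangeSet x (b :: w) = insert x (rangeSet (x + stepSize b) w) := by
  ext L
  simp only [rangeSet, List.length_cons, Finset.mem_image, Finset.mem_range, Finset.mem_insert]
  constructor
  · rintro ⟨_ | k, hk, rfl⟩
    · simp [walkPos_nil]
    · exact .inr ⟨k, by omega, by rw [List.take_succ_cons, walkPos_cons]⟩
  · rintro (rfl | ⟨k, hk, rfl⟩)
    · exact ⟨0, by omega, walkPos_nil _⟩
    · exact ⟨k + 1, by omega, by rw [List.take_succ_cons, walkPos_cons]⟩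

lemma start_mem_rangeSet (x : ℤ) (w : List Bool) : x ∈ rangeSet x w :=
  Finset.mem_image.2 ⟨0, by simp, walkPos_nil x⟩

lemma walkPos_mem_rangeSet (x : ℤ) (w : List Bool) : walkPos x w ∈ rangeSet x w :=
  Finset.mem_image.2 ⟨w.length, by simp, by rw [List.take_length]⟩

lemma ordConnected_rangeSet (x : ℤ) (w : List Bool) : (rangeSet x w : Set ℤ).OrdConnected := by
  suffices ∀ x, ∀ u ∈ rangeSet x w, ∀ v ∈ rangeSet x w, ∀ L, u ≤ L → L ≤ v →
      L ∈ rangeSet x w from ⟨fun u hu v hv L hL => this x u hu v hv L hL.1 hL.2⟩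
  induction w with
  | nil => simp only [rangeSet_nil, Finset.mem_singleton]; omega
  | cons b w ih =>
    intro x u hu v hv L h1 h2
    simp only [rangeSet_cons, Finset.mem_insert] at hu hv ⊢
    have hnext := start_mem_rangeSet (x + stepSize b) w
    have hstep : stepSize b = 1 ∨ stepSize b = -1 := by cases b <;> simp
    by_cases hLx : L = x
    · exact .inl hLx
    refine .inr ?_
    rcases hu with hu | hu <;> rcases hv with hv | hv
    · omega
    · exact ih _ _ hnext _ hv L (by omega) h2
    · exact ih _ _ hu _ hnext L h1 (by omega)
    · exact ih _ _ hu _ hv L h1 h2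

section Card

variable {s : Finset ℤ} {k : ℤ}

lemma le_card_iff_of_isLeast {lo : ℤ} (hs : (s : Set ℤ).OrdConnected)
    (hlo : IsLeast (s : Set ℤ) lo) (hk : 1 ≤ k) : k ≤ s.card ↔ lo + k - 1 ∈ s := by
  constructor
  · intro hcard
    by_contra hmem
    have hsub : s ⊆ Finset.Icc lo (lo + k - 2) := fun L hL => by
      have hL' : lo ≤ L := hlo.2 hL
      refine Finset.mem_Icc.2 ⟨hL', not_lt.1 fun hlt => hmem ?_⟩
      exact hs.out hlo.1 hL ⟨by omega, by omega⟩
    have := Finset.card_le_card hsub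
    rw [Int.card_Icc] at this
    omega
  · intro hmem
    have hsub : Finset.Icc lo (lo + k - 1) ⊆ s := fun L hL => by
      simpa using hs.out hlo.1 hmem (by simpa using hL)
    have := Finset.card_le_card hsub
    rw [Int.card_Icc] at this
    omega

lemma le_card_iff_of_isGreatest {hi : ℤ} (hs : (s : Set ℤ).OrdConnected)
    (hhi : IsGreatest (s : Set ℤ) hi) (hk : 1 ≤ k) : k ≤ s.card ↔ hi + 1 - k ∈ s := by
  constructor
  · intro hcard
    by_contra hmem
    have hsub : s ⊆ Finset.Icc (hi + 2 - k) hi := fun L hL => by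
      have hL' : L ≤ hi := hhi.2 hL
      refine Finset.mem_Icc.2 ⟨not_lt.1 fun hlt => hmem ?_, hL'⟩
      exact hs.out hL hhi.1 ⟨by omega, by omega⟩
    have := Finset.card_le_card hsub
    rw [Int.card_Icc] at this
    omega
  · intro hmem
    have hsub : Finset.Icc (hi + 1 - k) hi ⊆ s := fun L hL => by
      simpa using hs.out hmem hhi.1 (by simpa using hL)
    have := Finset.card_le_card hsub
    rw [Int.card_Icc] at this
    omega

end Card

lemma mem_rangeSet_of_le_of_le {x u v L : ℤ} {w : List Bool} (hu : u ∈ rangeSet x w)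
    (hv : v ∈ rangeSet x w) (h1 : u ≤ L) (h2 : L ≤ v) : L ∈ rangeSet x w :=
  (ordConnected_rangeSet x w).out hu hv ⟨h1, h2⟩

lemma mem_rangeSet_of_walkPos_le {x L : ℤ} {w : List Bool} (h1 : walkPos x w ≤ L)
    (h2 : L ≤ x) : L ∈ rangeSet x w :=
  mem_rangeSet_of_le_of_le (walkPos_mem_rangeSet x w) (start_mem_rangeSet x w) h1 h2

lemma mem_rangeSet_of_le_walkPos {x L : ℤ} {w : List Bool} (h1 : x ≤ L)
    (h2 : L ≤ walkPos x w) : L ∈ rangeSet x w :=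
  mem_rangeSet_of_le_of_le (start_mem_rangeSet x w) (walkPos_mem_rangeSet x w) h1 h2

namespace IsExitPath

variable {N : ℕ} {x k : ℤ} {w : List Bool}

lemma rangeSet_subset (h : IsExitPath N x w) : rangeSet x w ⊆ Finset.Icc 0 (N : ℤ) := by
  intro L hL
  obtain ⟨k, hk, rfl⟩ := Finset.mem_image.1 hL
  exact h.walkPos_take_mem_Icc (by simpa [Nat.lt_succ_iff] using hk)

lemma start_mem_Icc (h : IsExitPath N x w) : 0 ≤ x ∧ x ≤ N :=
  Finset.mem_Icc.1 (h.rangeSet_subset (start_mem_rangeSet x w))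

/-- The range of an exit path is an integer interval with one end at `0` or `N`, so its size
is read off from whether the other end is visited. -/
lemma le_rangeCount_iff (h : IsExitPath N x w) (hk : 1 ≤ k) :
    k ≤ rangeCount x w ↔ (walkPos x w = 0 ∧ k - 1 ∈ rangeSet x w) ∨
      (walkPos x w = N ∧ N + 1 - k ∈ rangeSet x w) := by
  have hbound L (hL : L ∈ rangeSet x w) := Finset.mem_Icc.1 (h.rangeSet_subset hL)
  have hlow (h0 : walkPos x w = 0) : k ≤ rangeCount x w ↔ k - 1 ∈ rangeSet x w := by
    simpa [rangeCount] using le_card_iff_of_isLeast (ordConnected_rangeSet x w)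
      ⟨h0 ▸ walkPos_mem_rangeSet x w, fun L hL => (hbound L hL).1⟩ hk
  have hhigh (hN : walkPos x w = N) : k ≤ rangeCount x w ↔ N + 1 - k ∈ rangeSet x w :=
    le_card_iff_of_isGreatest (ordConnected_rangeSet x w)
      ⟨hN ▸ walkPos_mem_rangeSet x w, fun L hL => (hbound L hL).2⟩ hk
  constructor
  · intro hR
    rcases h.2 with h0 | hN
    exacts [.inl ⟨h0, (hlow h0).1 hR⟩, .inr ⟨hN, (hhigh hN).1 hR⟩]
  · rintro (⟨h0, hmem⟩ | ⟨hN, hmem⟩)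
    exacts [(hlow h0).2 hmem, (hhigh hN).2 hmem]

lemma le_rangeCount (h : IsExitPath N x w) (hk : 1 ≤ k) (ha : k - 1 ≤ x)
    (hb : x ≤ N + 1 - k) : k ≤ rangeCount x w := by
  have := h.start_mem_Icc
  rw [h.le_rangeCount_iff hk]
  rcases h.2 with h0 | hN
  exacts [.inl ⟨h0, mem_rangeSet_of_walkPos_le (by omega) ha⟩,
    .inr ⟨hN, mem_rangeSet_of_le_walkPos hb (by omega)⟩]

lemma le_rangeCount_iff_of_le_of_le (h : IsExitPath N x w) (hk : 1 ≤ k) (hkN : k ≤ N + 1)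
    (ha : x ≤ k - 1) (hb : x ≤ N + 1 - k) :
    k ≤ rangeCount x w ↔ k - 1 ∈ rangeSet x w := by
  rw [h.le_rangeCount_iff hk]
  constructor
  · rintro (⟨-, hmem⟩ | ⟨hN, -⟩)
    exacts [hmem, mem_rangeSet_of_le_walkPos ha (by omega)]
  · intro hmem
    rcases h.2 with h0 | hN
    exacts [.inl ⟨h0, hmem⟩, .inr ⟨hN, mem_rangeSet_of_le_walkPos hb (by omega)⟩]

lemma le_rangeCount_iff_of_ge_of_ge (h : IsExitPath N x w) (hk : 1 ≤ k) (hkN : k ≤ N + 1)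
    (ha : k - 1 ≤ x) (hb : N + 1 - k ≤ x) :
    k ≤ rangeCount x w ↔ N + 1 - k ∈ rangeSet x w := by
  rw [h.le_rangeCount_iff hk]
  constructor
  · rintro (⟨h0, -⟩ | ⟨-, hmem⟩)
    exacts [mem_rangeSet_of_walkPos_le (by omega) hb, hmem]
  · intro hmem
    rcases h.2 with h0 | hN
    exacts [.inl ⟨h0, mem_rangeSet_of_walkPos_le (by omega) ha⟩, .inr ⟨hN, hmem⟩]

lemma le_rangeCount_iff_of_le_of_ge (h : IsExitPath N x w) (hk : 1 ≤ k) (hkN : k ≤ N + 1)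
    (ha : x ≤ k - 1) (hb : N + 1 - k ≤ x) :
    k ≤ rangeCount x w ↔ k - 1 ∈ rangeSet x w ∧ N + 1 - k ∈ rangeSet x w := by
  rw [h.le_rangeCount_iff hk]
  constructor
  · rintro (⟨h0, hmem⟩ | ⟨hN, hmem⟩)
    exacts [⟨hmem, mem_rangeSet_of_walkPos_le (by omega) hb⟩,
      ⟨mem_rangeSet_of_le_walkPos ha (by omega), hmem⟩]
  · rintro ⟨ha', hb'⟩
    rcases h.2 with h0 | hN
    exacts [.inl ⟨h0, ha'⟩, .inr ⟨hN, hb'⟩]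

lemma mem_rangeSet_or_mem_rangeSet (h : IsExitPath N x w) (hkN : k ≤ N + 1)
    (ha : x ≤ k - 1) (hb : N + 1 - k ≤ x) :
    k - 1 ∈ rangeSet x w ∨ N + 1 - k ∈ rangeSet x w := by
  rcases h.2 with h0 | hN
  exacts [.inr (mem_rangeSet_of_walkPos_le (by omega) hb),
    .inl (mem_rangeSet_of_le_walkPos ha (by omega))]

end IsExitPath

section Probability

open ENNReal

/-- `wt` with values in `ℝ≥0∞`, where sums over paths need no summability hypotheses. -/
noncomputable def ewt (p : ℝ) (w : List Bool) : ℝ≥0∞ :=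
  ENNReal.ofReal p ^ w.count true * ENNReal.ofReal (1 - p) ^ w.count false

noncomputable def eprob (N : ℕ) (p : ℝ) (x : ℤ) (S : List Bool → Prop) : ℝ≥0∞ :=
  ∑' w : List Bool, {w | IsExitPath N x w ∧ S w}.indicator (ewt p) w

lemma ewt_nil (p : ℝ) : ewt p [] = 1 := by simp [ewt]

lemma ewt_cons (p : ℝ) (b : Bool) (w : List Bool) :
    ewt p (b :: w) = (if b then ENNReal.ofReal p else ENNReal.ofReal (1 - p)) * ewt p w := by
  cases b <;> simp [ewt, pow_succ] <;> ring

lemma tsum_list_bool_of_nil_eq_zero (f : List Bool → ℝ≥0∞) (h : f [] = 0) :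
    ∑' w, f w = ∑' w, f (true :: w) + ∑' w, f (false :: w) := by
  have hcons : Function.Injective fun bw : Bool × List Bool => bw.1 :: bw.2 :=
    fun _ _ h => Prod.ext (List.cons.inj h).1 (List.cons.inj h).2
  rw [← hcons.tsum_eq, ENNReal.tsum_prod', tsum_bool, add_comm]
  rintro (_ | ⟨b, w⟩) hw
  · exact absurd h hw
  · exact ⟨(b, w), rfl⟩

variable {N : ℕ} {p : ℝ} {x : ℤ}

lemma indicator_cons (hx0 : 0 < x) (hxN : x < N) (S : List Bool → Prop) (b : Bool)
    (w : List Bool) :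
    {w | IsExitPath N x w ∧ S w}.indicator (ewt p) (b :: w) =
      (if b then ENNReal.ofReal p else ENNReal.ofReal (1 - p)) *
        {w | IsExitPath N (x + stepSize b) w ∧ S (b :: w)}.indicator (ewt p) w := by
  classical
  simp only [Set.indicator_apply, Set.mem_ofPred_eq, isExitPath_cons_iff hx0 hxN, ewt_cons]
  split_ifs <;> simp

lemma eprob_eq_add (hx0 : 0 < x) (hxN : x < N) (S : List Bool → Prop) :
    eprob N p x S = ENNReal.ofReal p * eprob N p (x + 1) (fun w => S (true :: w)) +
      ENNReal.ofReal (1 - p) * eprob N p (x - 1) (fun w => S (false :: w)) := by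
  have hnil : {w | IsExitPath N x w ∧ S w}.indicator (ewt p) [] = 0 :=
    Set.indicator_of_notMem (fun h => by
      rcases isExitPath_nil_iff.1 h.1 with rfl | rfl <;> omega) _
  simp only [eprob, tsum_list_bool_of_nil_eq_zero _ hnil, indicator_cons hx0 hxN,
    ENNReal.tsum_mul_left, stepSize_true, stepSize_false, if_true, Bool.false_eq_true, if_false,
    ← sub_eq_add_neg]

lemma eprob_le_one_of_not_mem_Ioo (hx : ¬ (0 < x ∧ x < N)) (S : List Bool → Prop) :
    eprob N p x S ≤ 1 := by
  rw [eprob, tsum_eq_single []]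
  · exact (Set.indicator_le_self _ _ _).trans (ewt_nil p).le
  · exact fun w hw => Set.indicator_of_notMem (fun h => hw (h.1.eq_nil hx)) _

lemma eprob_length_le_le_one (hp0 : 0 ≤ p) (hp1 : p ≤ 1) (n : ℕ) :
    ∀ x, eprob N p x (fun w => w.length ≤ n) ≤ 1 := by
  induction n with
  | zero =>
    intro x
    by_cases hx : 0 < x ∧ x < N
    · rw [eprob_eq_add hx.1 hx.2]
      simp [eprob]
    · exact eprob_le_one_of_not_mem_Ioo hx _
  | succ n ih =>
    intro x
    by_cases hx : 0 < x ∧ x < N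
    · rw [eprob_eq_add hx.1 hx.2]
      simp only [List.length_cons, add_le_add_iff_right]
      calc _ ≤ ENNReal.ofReal p * 1 + ENNReal.ofReal (1 - p) * 1 := by gcongr <;> exact ih _
        _ = 1 := by rw [mul_one, mul_one, ← ENNReal.ofReal_add hp0 (by linarith)]; simp
    · exact eprob_le_one_of_not_mem_Ioo hx _

lemma eprob_le_one (hp0 : 0 ≤ p) (hp1 : p ≤ 1) (S : List Bool → Prop) :
    eprob N p x S ≤ 1 := by
  rw [eprob, ENNReal.tsum_eq_iSup_sum]
  refine iSup_le fun F => ?_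
  set n := F.sup List.length
  calc ∑ w ∈ F, {w | IsExitPath N x w ∧ S w}.indicator (ewt p) w
      ≤ ∑ w ∈ F, {w | IsExitPath N x w ∧ w.length ≤ n}.indicator (ewt p) w :=
        Finset.sum_le_sum fun w hw => Set.indicator_apply_le' (fun h =>
          (Set.indicator_of_mem (show w ∈ {w | _ ∧ _} from ⟨h.1, Finset.le_sup hw⟩) _).ge)
          fun _ => bot_le
    _ ≤ eprob N p x (fun w => w.length ≤ n) := ENNReal.sum_le_tsum F
    _ ≤ 1 := eprob_length_le_le_one hp0 hp1 _ x

lemma eprob_ne_top (hp0 : 0 ≤ p) (hp1 : p ≤ 1) (S : List Bool → Prop) :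
    eprob N p x S ≠ ∞ :=
  ((eprob_le_one hp0 hp1 S).trans_lt one_lt_top).ne

lemma prob_eq_toReal_eprob (hp0 : 0 ≤ p) (hp1 : p ≤ 1) (S : List Bool → Prop) :
    prob N p x S = (eprob N p x S).toReal := by
  have hne w : {w | IsExitPath N x w ∧ S w}.indicator (ewt p) w ≠ ∞ :=
    ((Set.indicator_le_self _ _ w).trans_lt (by simp [ewt, ENNReal.mul_lt_top])).ne
  classical
  rw [eprob, ENNReal.tsum_toReal_eq hne, prob]
  refine tsum_congr fun w => ?_
  simp only [Set.indicator_apply]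
  split_ifs <;> simp [ewt, wt, toReal_ofReal hp0, toReal_ofReal (sub_nonneg.2 hp1)]

lemma prob_eq_add (hp0 : 0 ≤ p) (hp1 : p ≤ 1) (hx0 : 0 < x) (hxN : x < N)
    (S : List Bool → Prop) :
    prob N p x S = p * prob N p (x + 1) (fun w => S (true :: w)) +
      (1 - p) * prob N p (x - 1) (fun w => S (false :: w)) := by
  simp only [prob_eq_toReal_eprob hp0 hp1, eprob_eq_add hx0 hxN]
  rw [ENNReal.toReal_add (mul_ne_top ofReal_ne_top (eprob_ne_top hp0 hp1 _))
    (mul_ne_top ofReal_ne_top (eprob_ne_top hp0 hp1 _)), toReal_mul, toReal_mul,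
    toReal_ofReal hp0, toReal_ofReal (sub_nonneg.2 hp1)]

lemma prob_and_add_prob_or (hp0 : 0 ≤ p) (hp1 : p ≤ 1) (S T : List Bool → Prop) :
    prob N p x (fun w => S w ∧ T w) + prob N p x (fun w => S w ∨ T w) =
      prob N p x S + prob N p x T := by
  have h : eprob N p x (fun w => S w ∨ T w) + eprob N p x (fun w => S w ∧ T w) =
      eprob N p x S + eprob N p x T := by
    have hor : {w | IsExitPath N x w ∧ (S w ∨ T w)} =
        {w | IsExitPath N x w ∧ S w} ∪ {w | IsExitPath N x w ∧ T w} := by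
      ext; simp only [Set.mem_union, Set.mem_ofPred_eq]; tauto
    have hand : {w | IsExitPath N x w ∧ (S w ∧ T w)} =
        {w | IsExitPath N x w ∧ S w} ∩ {w | IsExitPath N x w ∧ T w} := by
      ext; simp only [Set.mem_inter_iff, Set.mem_ofPred_eq]; tauto
    simp only [eprob, ← ENNReal.tsum_add, hor, hand, Set.indicator_union_add_inter_apply]
  have := congrArg ENNReal.toReal h
  simp only [ENNReal.toReal_add (eprob_ne_top hp0 hp1 _) (eprob_ne_top hp0 hp1 _)] at this
  simp only [prob_eq_toReal_eprob hp0 hp1]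
  linarith

lemma prob_congr {S T : List Bool → Prop} (h : ∀ w, IsExitPath N x w → (S w ↔ T w)) :
    prob N p x S = prob N p x T := by
  have : {w | IsExitPath N x w ∧ S w} = {w | IsExitPath N x w ∧ T w} :=
    Set.ext fun w => and_congr_right (h w)
  unfold prob
  rw [this]

lemma prob_of_not_mem_Ioo (hx : ¬ (0 < x ∧ x < N)) (S : List Bool → Prop)
    [Decidable (S [])] : prob N p x S = if (x = 0 ∨ x = N) ∧ S [] then 1 else 0 := by
  classical
  rw [prob, tsum_eq_single [] fun w hw =>
    Set.indicator_of_notMem (fun h => hw (h.1.eq_nil hx)) _]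
  simp only [Set.indicator_apply, Set.mem_ofPred_eq, isExitPath_nil_iff]
  split_ifs <;> simp [wt]

end Probability

def IsHarmonicOn (p : ℝ) (lo hi : ℤ) (f : ℤ → ℝ) : Prop :=
  ∀ y, lo < y → y < hi → f y = p * f (y + 1) + (1 - p) * f (y - 1)

noncomputable def oddsRatio (p : ℝ) : ℝ := (1 - p) / p

section OddsRatio

variable {p : ℝ}

lemma oddsRatio_pos (hp0 : 0 < p) (hp1 : p < 1) : 0 < oddsRatio p :=
  div_pos (by linarith) hp0

lemma oddsRatio_ne_one (hp : p ≠ 1 / 2) : oddsRatio p ≠ 1 := by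
  intro h
  rcases eq_or_ne p 0 with rfl | hp0
  · simp [oddsRatio] at h
  · rw [oddsRatio, div_eq_one_iff_eq hp0] at h
    exact hp (by linarith)

end OddsRatio

namespace IsHarmonicOn

variable {p : ℝ} {lo hi : ℤ} {f g : ℤ → ℝ}

lemma sub (hf : IsHarmonicOn p lo hi f) (hg : IsHarmonicOn p lo hi g) :
    IsHarmonicOn p lo hi (f - g) := fun y h1 h2 => by
  simp only [Pi.sub_apply, hf y h1 h2, hg y h1 h2]
  ring

lemma increment_eq (hp0 : 0 < p) (hf : IsHarmonicOn p lo hi f) {n : ℕ} (hn : lo + n + 1 ≤ hi) :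
    f (lo + n + 1) - f (lo + n) = oddsRatio p ^ n * (f (lo + 1) - f lo) := by
  induction n with
  | zero => simp
  | succ n ih =>
    have hharm := hf (lo + n + 1) (by omega) (by push_cast at hn; omega)
    rw [pow_succ, mul_comm _ (oddsRatio p), mul_assoc, ← ih (by omega)]
    simp only [oddsRatio, Nat.cast_succ, ← add_assoc, add_sub_cancel_right] at hharm ⊢
    rw [div_mul_eq_mul_div, eq_div_iff hp0.ne']
    linear_combination -hharm

lemma sub_eq_geom_sum_mul (hp0 : 0 < p) (hf : IsHarmonicOn p lo hi f) {n : ℕ}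
    (hn : lo + n ≤ hi) :
    f (lo + n) - f lo = (∑ j ∈ Finset.range n, oddsRatio p ^ j) * (f (lo + 1) - f lo) := by
  induction n with
  | zero => simp
  | succ n ih =>
    rw [Finset.sum_range_succ, add_mul, ← ih (by omega),
      ← hf.increment_eq hp0 (by push_cast at hn; omega), Nat.cast_succ, ← add_assoc]
    ring

/-- `f hi - f lo` is a positive multiple of the first increment. -/
lemma eq_zero (hp0 : 0 < p) (hp1 : p < 1) (hf : IsHarmonicOn p lo hi f) (hlo : f lo = 0)
    (hhi : f hi = 0) {y : ℤ} (hy : y ∈ Set.Icc lo hi) : f y = 0 := by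
  obtain ⟨hy1, hy2⟩ := hy
  obtain ⟨n, rfl⟩ : ∃ n : ℕ, y = lo + n := ⟨(y - lo).toNat, by omega⟩
  rcases (hy1.trans hy2).eq_or_lt with rfl | hlt
  · obtain rfl : n = 0 := by omega
    simpa using hlo
  obtain ⟨m, rfl⟩ : ∃ m : ℕ, hi = lo + (m + 1 : ℕ) := ⟨(hi - lo - 1).toNat, by omega⟩
  have hsum : 0 < ∑ j ∈ Finset.range (m + 1), oddsRatio p ^ j :=
    Finset.sum_pos (fun j _ => pow_pos (oddsRatio_pos hp0 hp1) j) (by simp)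
  have hδ : f (lo + 1) = 0 := by
    have h := hf.sub_eq_geom_sum_mul hp0 le_rfl
    rw [hhi, hlo, sub_zero, sub_zero] at h
    exact (mul_eq_zero.1 h.symm).resolve_left hsum.ne'
  simpa [hlo, hδ] using hf.sub_eq_geom_sum_mul hp0 hy2

lemma eqOn (hp0 : 0 < p) (hp1 : p < 1) (hf : IsHarmonicOn p lo hi f)
    (hg : IsHarmonicOn p lo hi g) (hlo : f lo = g lo) (hhi : f hi = g hi) :
    Set.EqOn f g (Set.Icc lo hi) := fun _ hy =>
  sub_eq_zero.1 ((hf.sub hg).eq_zero hp0 hp1 (sub_eq_zero.2 hlo) (sub_eq_zero.2 hhi) hy)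

end IsHarmonicOn

section Hitting

variable {N : ℕ} {p : ℝ}

lemma prob_true_eq_one (hp0 : 0 < p) (hp1 : p < 1) {x : ℤ} (hx : x ∈ Set.Icc 0 (N : ℤ)) :
    prob N p x (fun _ => True) = 1 := by
  refine IsHarmonicOn.eqOn (f := fun y => prob N p y fun _ => True) (g := fun _ => 1) hp0 hp1
    (fun y h0 hN => prob_eq_add hp0.le hp1.le h0 hN _) (fun _ _ _ => by ring) ?_ ?_ hx <;>
  simp [prob_of_not_mem_Ioo]

lemma prob_eq_one_of_forall (hp0 : 0 < p) (hp1 : p < 1) {x : ℤ} (hx : x ∈ Set.Icc 0 (N : ℤ))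
    {S : List Bool → Prop} (hS : ∀ w, IsExitPath N x w → S w) : prob N p x S = 1 :=
  (prob_congr fun w hw => iff_of_true (hS w hw) trivial).trans (prob_true_eq_one hp0 hp1 hx)

noncomputable def hitProb (N : ℕ) (p : ℝ) (a y : ℤ) : ℝ :=
  prob N p y (fun w => a ∈ rangeSet y w)

lemma hitProb_eq_add (hp0 : 0 ≤ p) (hp1 : p ≤ 1) {a y : ℤ} (hy0 : 0 < y) (hyN : y < N)
    (hya : y ≠ a) :
    hitProb N p a y = p * hitProb N p a (y + 1) + (1 - p) * hitProb N p a (y - 1) := by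
  simp only [hitProb, prob_eq_add hp0 hp1 hy0 hyN, rangeSet_cons, Finset.mem_insert,
    Ne.symm hya, false_or, stepSize_true, stepSize_false, ← sub_eq_add_neg]

lemma isHarmonicOn_hitProb (hp0 : 0 ≤ p) (hp1 : p ≤ 1) {a lo hi : ℤ} (hlo : 0 ≤ lo)
    (hhi : hi ≤ N) (ha : a ∉ Set.Ioo lo hi) : IsHarmonicOn p lo hi (hitProb N p a) :=
  fun y h1 h2 => hitProb_eq_add hp0 hp1 (by omega) (by omega) (by rintro rfl; exact ha ⟨h1, h2⟩)

lemma isHarmonicOn_ruin (hp0 : 0 < p) (hp1 : p < 1) (lo hi e : ℤ) (D : ℝ) :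
    IsHarmonicOn p lo hi (fun y => (1 - oddsRatio p ^ (y - e)) / D) := by
  intro y _ _
  have hρ := (oddsRatio_pos hp0 hp1).ne'
  dsimp only
  rw [show y + 1 - e = y - e + 1 by ring, show y - 1 - e = y - e - 1 by ring,
    zpow_add_one₀ hρ, zpow_sub_one₀ hρ]
  have h1 : p * oddsRatio p = 1 - p := mul_div_cancel₀ _ hp0.ne'
  have h2 : (1 - p) * (oddsRatio p)⁻¹ = p := by
    rw [oddsRatio, inv_div, mul_div_cancel₀ _ (sub_ne_zero.2 hp1.ne')]
  linear_combination (oddsRatio p ^ (y - e) / D) * (h1 + h2)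

/-- Gambler's ruin: on the interval between `a` and the end `e` of `[0, N]`, both sides solve
the Dirichlet problem of the walk with boundary values `0` at `e` and `1` at `a`. -/
lemma hitProb_eq (hp0 : 0 < p) (hp1 : p < 1) (hp : p ≠ 1 / 2) {a e y : ℤ}
    (he : e = 0 ∨ e = N) (ha : a ∈ Set.Icc 0 (N : ℤ)) (hae : a ≠ e)
    (hy : y ∈ Set.uIcc e a) :
    hitProb N p a y = (1 - oddsRatio p ^ (y - e)) / (1 - oddsRatio p ^ (a - e)) := by
  have hD : 1 - oddsRatio p ^ (a - e) ≠ 0 := fun h => hae <| sub_eq_zero.1 <|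
    zpow_right_injective₀ (oddsRatio_pos hp0 hp1) (oddsRatio_ne_one hp)
      (show oddsRatio p ^ (a - e) = oddsRatio p ^ (0 : ℤ) by rw [zpow_zero]; linarith)
  have hval z (hz : z = e ∨ z = a) :
      hitProb N p a z = (1 - oddsRatio p ^ (z - e)) / (1 - oddsRatio p ^ (a - e)) := by
    rcases hz with rfl | rfl
    · rw [hitProb, prob_of_not_mem_Ioo (by omega)]
      simp [rangeSet_nil, hae]
    · rw [div_self hD]
      exact prob_eq_one_of_forall hp0 hp1 ha fun w _ => start_mem_rangeSet z w
  have he' : e ∈ Set.Icc 0 (N : ℤ) := by rcases he with rfl | rfl <;> simp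
  refine IsHarmonicOn.eqOn (lo := e ⊓ a) (hi := e ⊔ a) hp0 hp1
    (isHarmonicOn_hitProb hp0.le hp1.le (le_inf he'.1 ha.1) (sup_le he'.2 ha.2) ?_)
    (isHarmonicOn_ruin hp0 hp1 _ _ e _) (hval _ ?_) (hval _ ?_) hy
  · exact fun ⟨h1, h2⟩ => by omega
  · rcases min_choice e a with h | h <;> simp [h]
  · rcases max_choice e a with h | h <;> simp [h]

end Hitting

section Limits

open Real

lemma tendsto_div_natCast_of_abs_sub_le {m : ℕ → ℝ} {γ C : ℝ}
    (h : ∀ N : ℕ, |m N - γ * N| ≤ C) :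
    Tendsto (fun N : ℕ => m N / N) atTop (𝓝 γ) := by
  have hsmall : Tendsto (fun N : ℕ => (m N - γ * N) / N) atTop (𝓝 0) :=
    squeeze_zero_norm (fun N => by rw [norm_div, Real.norm_natCast]; gcongr; exact h N)
      (tendsto_const_div_atTop_nhds_zero_nat C)
  have hlim := (tendsto_const_nhds (x := γ)).add hsmall
  rw [add_zero] at hlim
  refine hlim.congr' ?_
  filter_upwards [eventually_ne_atTop 0] with N hN
  field_simp
  ring

lemma tendsto_natCast_mul_log_oddsRatio (c : ℝ) :
    Tendsto (fun N : ℕ => N * log (oddsRatio (1 / 2 + c / N))) atTop (𝓝 (-4 * c)) := by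
  have hlog (t : ℝ) : Tendsto (fun N : ℕ => N * log (1 + t / N)) atTop (𝓝 t) :=
    tendsto_nat_mul_log_one_add_of_tendsto <| tendsto_const_nhds.congr' <| by
      filter_upwards [eventually_ne_atTop 0] with N hN
      field_simp
  have hlim := (hlog (-(2 * c))).sub (hlog (2 * c))
  rw [show -(2 * c) - 2 * c = -4 * c by ring] at hlim
  refine hlim.congr' ?_
  have hlarge : ∀ᶠ N : ℕ in atTop, 2 * |c| < N :=
    tendsto_natCast_atTop_atTop.eventually_gt_atTop _
  filter_upwards [hlarge] with N hN
  have hN0 : (0 : ℝ) < N := (mul_nonneg zero_le_two (abs_nonneg c)).trans_lt hN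
  have hsmall : |2 * c / N| < 1 := by
    rwa [abs_div, abs_mul, abs_two, Nat.abs_cast, div_lt_one hN0]
  obtain ⟨h1, h2⟩ := abs_lt.1 hsmall
  rw [← mul_sub, ← log_div (by rw [neg_div]; linarith) (by linarith)]
  congr 2
  rw [oddsRatio]
  field_simp
  ring

lemma eventually_half_add_div (c : ℝ) :
    ∀ᶠ N : ℕ in atTop, 0 < 1 / 2 + c / N ∧ 1 / 2 + c / N < 1 := by
  have hp := (tendsto_const_div_atTop_nhds_zero_nat c).const_add (1 / 2 : ℝ)
  rw [add_zero] at hp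
  exact hp.eventually (Ioo_mem_nhds (a := 0) (b := 1) (by norm_num) (by norm_num))

lemma tendsto_oddsRatio_zpow (c : ℝ) {m : ℕ → ℤ} {γ : ℝ}
    (hm : Tendsto (fun N : ℕ => (m N : ℝ) / N) atTop (𝓝 γ)) :
    Tendsto (fun N : ℕ => oddsRatio (1 / 2 + c / N) ^ m N) atTop (𝓝 (exp (-4 * c * γ))) := by
  have hlim := (Real.continuous_exp.tendsto _).comp (hm.mul (tendsto_natCast_mul_log_oddsRatio c))
  rw [show γ * (-4 * c) = -4 * c * γ by ring] at hlim
  refine hlim.congr' ?_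
  filter_upwards [eventually_half_add_div c, eventually_ne_atTop 0] with N hp hN
  rw [Function.comp_apply, ← mul_assoc, div_mul_cancel₀ _ (Nat.cast_ne_zero.2 hN), ← log_zpow,
    exp_log (zpow_pos (oddsRatio_pos hp.1 hp.2) _)]

lemma one_sub_exp_ne_zero {x : ℝ} (hx : x ≠ 0) : 1 - exp x ≠ 0 := by
  rw [sub_ne_zero, ne_comm, Ne, exp_eq_one_iff]
  exact hx

lemma tendsto_ruin {c γ δ : ℝ} {m n : ℕ → ℤ}
    (hm : Tendsto (fun N : ℕ => (m N : ℝ) / N) atTop (𝓝 γ))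
    (hn : Tendsto (fun N : ℕ => (n N : ℝ) / N) atTop (𝓝 δ)) (hcδ : c * δ ≠ 0) :
    Tendsto (fun N : ℕ => (1 - oddsRatio (1 / 2 + c / N) ^ m N) /
        (1 - oddsRatio (1 / 2 + c / N) ^ n N)) atTop
      (𝓝 ((1 - exp (-4 * c * γ)) / (1 - exp (-4 * c * δ)))) := by
  refine (tendsto_const_nhds.sub (tendsto_oddsRatio_zpow c hm)).div
    (tendsto_const_nhds.sub (tendsto_oddsRatio_zpow c hn)) (one_sub_exp_ne_zero ?_)
  contrapose! hcδ
  linarith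

lemma floor_add_ceil_le_of_add_le {a b : ℝ} {n : ℤ} (h : a + b ≤ n) :
    ⌊a⌋ + ⌈b⌉ ≤ n := by
  have h1 := Int.floor_le a
  have h2 := Int.ceil_lt_add_one b
  have : ((⌊a⌋ + ⌈b⌉ : ℤ) : ℝ) < n + 1 := by push_cast; linarith
  exact Int.lt_add_one_iff.1 (by exact_mod_cast this)

lemma lt_floor_add_ceil_of_add_one_le {a b : ℝ} {n : ℤ} (h : n + 1 ≤ a + b) :
    n < ⌊a⌋ + ⌈b⌉ := by
  have h1 := Int.lt_floor_add_one a
  have h2 := Int.le_ceil b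
  have : (n : ℝ) < ((⌊a⌋ + ⌈b⌉ : ℤ) : ℝ) := by push_cast; linarith
  exact_mod_cast this

lemma eventually_le_mul_natCast {ε : ℝ} (hε : 0 < ε) (C : ℝ) :
    ∀ᶠ N : ℕ in atTop, C ≤ ε * N :=
  (tendsto_natCast_atTop_atTop.const_mul_atTop hε).eventually_ge_atTop C

lemma tendsto_floor_mul_sub_mul_div (γ : ℝ) (j : ℤ) :
    Tendsto (fun N : ℕ => ((⌊γ * N⌋ - j * N : ℤ) : ℝ) / N) atTop (𝓝 (γ - j)) := by
  refine tendsto_div_natCast_of_abs_sub_le (C := 1) fun N => ?_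
  have h1 := Int.floor_le (γ * N)
  have h2 := Int.lt_floor_add_one (γ * N)
  push_cast
  rw [abs_le]
  constructor <;> linarith

lemma tendsto_ceil_mul_sub_div (γ : ℝ) (j : ℤ) :
    Tendsto (fun N : ℕ => ((⌈γ * N⌉ - j : ℤ) : ℝ) / N) atTop (𝓝 γ) := by
  refine tendsto_div_natCast_of_abs_sub_le (C := |(j : ℝ)| + 1) fun N => ?_
  have h1 := Int.le_ceil (γ * N)
  have h2 := Int.ceil_lt_add_one (γ * N)
  have h3 := neg_abs_le (j : ℝ)
  have h4 := le_abs_self (j : ℝ)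
  push_cast
  rw [abs_le]
  constructor <;> linarith

end Limits

section RangeTail

variable {N : ℕ} {p : ℝ} {x k : ℤ}

lemma prob_le_rangeCount_eq_one (hp0 : 0 < p) (hp1 : p < 1) (hx : x ∈ Set.Icc 0 (N : ℤ))
    (hk : 1 ≤ k) (ha : k - 1 ≤ x) (hb : x ≤ N + 1 - k) :
    prob N p x (fun w => k ≤ rangeCount x w) = 1 :=
  prob_eq_one_of_forall hp0 hp1 hx fun _ hw => hw.le_rangeCount hk ha hb

lemma hitProb_eq_of_le (hp0 : 0 < p) (hp1 : p < 1) (hp : p ≠ 1 / 2) {a y : ℤ} (ha : 0 < a)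
    (haN : a ≤ N) (hy : y ∈ Set.Icc 0 a) :
    hitProb N p a y = (1 - oddsRatio p ^ y) / (1 - oddsRatio p ^ a) := by
  simpa using hitProb_eq hp0 hp1 hp (.inl rfl) ⟨ha.le, haN⟩ ha.ne' (Set.mem_uIcc.2 (.inl hy))

lemma hitProb_eq_of_ge (hp0 : 0 < p) (hp1 : p < 1) (hp : p ≠ 1 / 2) {a y : ℤ} (ha : 0 ≤ a)
    (haN : a < N) (hy : y ∈ Set.Icc a N) :
    hitProb N p a y = (1 - oddsRatio p ^ (y - N)) / (1 - oddsRatio p ^ (a - N)) :=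
  hitProb_eq hp0 hp1 hp (.inr rfl) ⟨ha, haN.le⟩ haN.ne (Set.mem_uIcc.2 (.inr hy))

lemma prob_le_rangeCount_of_le_of_le (hp0 : 0 < p) (hp1 : p < 1) (hp : p ≠ 1 / 2)
    (hx : 0 ≤ x) (hk : 2 ≤ k) (hkN : k ≤ N + 1) (ha : x ≤ k - 1) (hb : x ≤ N + 1 - k) :
    prob N p x (fun w => k ≤ rangeCount x w) =
      (1 - oddsRatio p ^ x) / (1 - oddsRatio p ^ (k - 1)) := by
  rw [prob_congr fun _ hw => hw.le_rangeCount_iff_of_le_of_le (by omega) hkN ha hb]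
  exact hitProb_eq_of_le hp0 hp1 hp (by omega) (by omega) ⟨hx, ha⟩

lemma prob_le_rangeCount_of_ge_of_ge (hp0 : 0 < p) (hp1 : p < 1) (hp : p ≠ 1 / 2)
    (hx : x ≤ N) (hk : 2 ≤ k) (hkN : k ≤ N + 1) (ha : k - 1 ≤ x) (hb : N + 1 - k ≤ x) :
    prob N p x (fun w => k ≤ rangeCount x w) =
      (1 - oddsRatio p ^ (x - N)) / (1 - oddsRatio p ^ (1 - k)) := by
  rw [prob_congr fun _ hw => hw.le_rangeCount_iff_of_ge_of_ge (by omega) hkN ha hb,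
    show (1 : ℤ) - k = N + 1 - k - N by ring]
  exact hitProb_eq_of_ge hp0 hp1 hp (by omega) (by omega) ⟨hb, hx⟩

lemma prob_le_rangeCount_of_le_of_ge (hp0 : 0 < p) (hp1 : p < 1) (hp : p ≠ 1 / 2)
    (hk : 2 ≤ k) (hkN : k ≤ N) (ha : x ≤ k - 1) (hb : N + 1 - k ≤ x) :
    prob N p x (fun w => k ≤ rangeCount x w) =
      (1 - oddsRatio p ^ x) / (1 - oddsRatio p ^ (k - 1)) +
        (1 - oddsRatio p ^ (x - N)) / (1 - oddsRatio p ^ (1 - k)) - 1 := by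
  have hx : x ∈ Set.Icc 0 (N : ℤ) := ⟨by omega, by omega⟩
  have hup := hitProb_eq_of_le hp0 hp1 hp (N := N) (by omega) (by omega) ⟨hx.1, ha⟩
  have hdown := hitProb_eq_of_ge hp0 hp1 hp (N := N) (by omega) (by omega) ⟨hb, hx.2⟩
  rw [show (N : ℤ) + 1 - k - N = 1 - k by ring] at hdown
  have hunion := prob_eq_one_of_forall hp0 hp1 hx fun _ hw =>
    hw.mem_rangeSet_or_mem_rangeSet (by omega) ha hb
  have hincl := prob_and_add_prob_or hp0.le hp1.le (N := N) (x := x)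
    (fun w => k - 1 ∈ rangeSet x w) (fun w => N + 1 - k ∈ rangeSet x w)
  rw [prob_congr fun _ hw => hw.le_rangeCount_iff_of_le_of_ge (by omega) (by omega) ha hb,
    ← hup, ← hdown]
  simp only [hitProb]
  linarith

end RangeTail

noncomputable def rangeTailProb (c α β : ℝ) (N : ℕ) : ℝ :=
  prob N (1 / 2 + c / (N : ℝ)) ⌊α * (N : ℝ)⌋
    fun w => β * (N : ℝ) ≤ (rangeCount ⌊α * (N : ℝ)⌋ w : ℝ)

section RangeTailLimit

open Real

variable {c α β : ℝ}

lemma rangeTailProb_eq (N : ℕ) :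
    rangeTailProb c α β N = prob N (1 / 2 + c / N) ⌊α * N⌋
      fun w => ⌈β * N⌉ ≤ (rangeCount ⌊α * N⌋ w : ℤ) := by
  simp only [rangeTailProb, Int.ceil_le, Int.cast_natCast]

lemma half_add_div_ne_half (hc : c ≠ 0) {N : ℕ} (hN : N ≠ 0) : 1 / 2 + c / N ≠ 1 / 2 := by
  simpa using ⟨hc, hN⟩

lemma tendsto_rangeTailProb_of_le_min (hβ : 0 < β) (hβα : β ≤ α)
    (hβα' : β ≤ 1 - α) : Tendsto (rangeTailProb c α β) atTop (𝓝 1) := by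
  refine tendsto_const_nhds.congr' ?_
  filter_upwards [eventually_half_add_div c, eventually_ne_atTop 0] with N hp hN
  have hN' : (0 : ℝ) < N := by positivity
  rw [rangeTailProb_eq, prob_le_rangeCount_eq_one hp.1 hp.2]
  · exact ⟨Int.floor_nonneg.2 (by nlinarith),
      (Int.floor_le_floor (by nlinarith)).trans (Int.floor_natCast N).le⟩
  · exact Int.ceil_pos.2 (by positivity)
  · linarith [Int.ceil_le_ceil (mul_le_mul_of_nonneg_right hβα hN'.le),
      Int.ceil_le_floor_add_one (α * N)]
  · linarith [floor_add_ceil_le_of_add_le (a := α * N) (b := β * N) (n := N)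
      (by push_cast; nlinarith)]

lemma tendsto_ruin_up (hc : c ≠ 0) (hβ : 0 < β) :
    Tendsto (fun N : ℕ => (1 - oddsRatio (1 / 2 + c / N) ^ ⌊α * N⌋) /
        (1 - oddsRatio (1 / 2 + c / N) ^ (⌈β * N⌉ - 1))) atTop
      (𝓝 ((1 - exp (-4 * c * α)) / (1 - exp (-4 * c * β)))) :=
  tendsto_ruin (by simpa using tendsto_floor_mul_sub_mul_div α 0)
    (by simpa using tendsto_ceil_mul_sub_div β 1) (mul_ne_zero hc hβ.ne')

lemma tendsto_ruin_down (hc : c ≠ 0) (hβ : 0 < β) :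
    Tendsto (fun N : ℕ => (1 - oddsRatio (1 / 2 + c / N) ^ (⌊α * N⌋ - N)) /
        (1 - oddsRatio (1 / 2 + c / N) ^ (1 - ⌈β * N⌉))) atTop
      (𝓝 ((1 - exp (4 * c * (1 - α))) / (1 - exp (4 * c * β)))) := by
  rw [show 4 * c * (1 - α) = -4 * c * (α - 1) by ring, show 4 * c * β = -4 * c * -β by ring]
  refine tendsto_ruin (by simpa using tendsto_floor_mul_sub_mul_div α 1) ?_
    (mul_ne_zero hc (neg_ne_zero.2 hβ.ne'))
  refine (tendsto_ceil_mul_sub_div β 1).neg.congr fun N => ?_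
  push_cast
  ring

lemma tendsto_rangeTailProb_of_lt_of_le_one_sub (hc : c ≠ 0) (hα : 0 ≤ α) (hαβ : α < β)
    (hβ : β ≤ 1 - α) :
    Tendsto (rangeTailProb c α β) atTop
      (𝓝 ((1 - exp (-4 * c * α)) / (1 - exp (-4 * c * β)))) := by
  have hβ0 : 0 < β := hα.trans_lt hαβ
  refine (tendsto_ruin_up hc hβ0).congr' ?_
  filter_upwards [eventually_half_add_div c, eventually_ne_atTop 0,
    eventually_le_mul_natCast hβ0 2] with N hp hN hβN
  have hN' : (0 : ℝ) < N := by positivity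
  have hx := Int.floor_nonneg.2 (by positivity : 0 ≤ α * N)
  have hk := Int.lt_ceil.2 (show ((1 : ℤ) : ℝ) < β * N by push_cast; linarith)
  have hxk := Int.floor_lt_ceil_of_lt (show α * N < β * N by nlinarith)
  have hsum := floor_add_ceil_le_of_add_le (a := α * N) (b := β * N) (n := N)
    (by push_cast; nlinarith)
  rw [rangeTailProb_eq, prob_le_rangeCount_of_le_of_le hp.1 hp.2 (half_add_div_ne_half hc hN) hx]
    <;> omega

lemma tendsto_rangeTailProb_of_one_sub_lt_of_le (hc : c ≠ 0) (hα : α ≤ 1)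
    (hαβ : 1 - α < β) (hβ : β ≤ α) :
    Tendsto (rangeTailProb c α β) atTop
      (𝓝 ((1 - exp (4 * c * (1 - α))) / (1 - exp (4 * c * β)))) := by
  have hβ0 : 0 < β := by linarith
  refine (tendsto_ruin_down hc hβ0).congr' ?_
  filter_upwards [eventually_half_add_div c, eventually_ne_atTop 0,
    eventually_le_mul_natCast hβ0 2, eventually_le_mul_natCast (by linarith : 0 < α + β - 1) 1]
    with N hp hN hβN hαβN
  have hN' : (0 : ℝ) < N := by positivity
  have hx := (Int.floor_le_floor (by nlinarith : α * N ≤ N)).trans (Int.floor_natCast N).le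
  have hk := Int.lt_ceil.2 (show ((1 : ℤ) : ℝ) < β * N by push_cast; linarith)
  have hkN := Int.ceil_le.2 (show β * N ≤ ((N : ℤ) : ℝ) by push_cast; nlinarith)
  have hkx := (Int.ceil_le_ceil (by nlinarith : β * N ≤ α * N)).trans
    (Int.ceil_le_floor_add_one (α * N))
  have hsum := lt_floor_add_ceil_of_add_one_le (a := α * N) (b := β * N) (n := N)
    (by push_cast; nlinarith)
  rw [rangeTailProb_eq, prob_le_rangeCount_of_ge_of_ge hp.1 hp.2 (half_add_div_ne_half hc hN) hx]
    <;> omega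

lemma tendsto_rangeTailProb_of_lt_of_one_sub_lt (hc : c ≠ 0) (hαβ : α < β)
    (hαβ' : 1 - α < β) (hβ : β ≤ 1) :
    Tendsto (rangeTailProb c α β) atTop
      (𝓝 ((1 - exp (-4 * c * α)) / (1 - exp (-4 * c * β)) +
        (1 - exp (4 * c * (1 - α))) / (1 - exp (4 * c * β)) - 1)) := by
  have hβ0 : 0 < β := by linarith
  refine (((tendsto_ruin_up hc hβ0).add (tendsto_ruin_down hc hβ0)).sub
    tendsto_const_nhds).congr' ?_
  filter_upwards [eventually_half_add_div c, eventually_ne_atTop 0,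
    eventually_le_mul_natCast hβ0 2, eventually_le_mul_natCast (by linarith : 0 < α + β - 1) 1]
    with N hp hN hβN hαβN
  have hN' : (0 : ℝ) < N := by positivity
  have hk := Int.lt_ceil.2 (show ((1 : ℤ) : ℝ) < β * N by push_cast; linarith)
  have hkN := Int.ceil_le.2 (show β * N ≤ ((N : ℤ) : ℝ) by push_cast; nlinarith)
  have hxk := Int.floor_lt_ceil_of_lt (show α * N < β * N by nlinarith)
  have hsum := lt_floor_add_ceil_of_add_one_le (a := α * N) (b := β * N) (n := N)
    (by push_cast; nlinarith)
  rw [rangeTailProb_eq, prob_le_rangeCount_of_le_of_ge hp.1 hp.2 (half_add_div_ne_half hc hN)]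
    <;> omega

lemma tendsto_rangeTailProb_of_le_of_le_one_sub (hc : c ≠ 0) (hα : 0 ≤ α) (hβ0 : 0 < β)
    (hαβ : α ≤ β) (hβ : β ≤ 1 - α) :
    Tendsto (rangeTailProb c α β) atTop
      (𝓝 ((1 - exp (-4 * c * α)) / (1 - exp (-4 * c * β)))) := by
  rcases hαβ.eq_or_lt with rfl | hlt
  · rw [div_self (one_sub_exp_ne_zero (by simp [hc, hβ0.ne']))]
    exact tendsto_rangeTailProb_of_le_min hβ0 le_rfl hβ
  · exact tendsto_rangeTailProb_of_lt_of_le_one_sub hc hα hlt hβ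

lemma tendsto_rangeTailProb_of_one_sub_le_of_le (hc : c ≠ 0) (hα : α ≤ 1) (hβ0 : 0 < β)
    (hαβ : 1 - α ≤ β) (hβ : β ≤ α) :
    Tendsto (rangeTailProb c α β) atTop
      (𝓝 ((1 - exp (4 * c * (1 - α))) / (1 - exp (4 * c * β)))) := by
  rcases hαβ.eq_or_lt with h | hlt
  · rw [h, div_self (one_sub_exp_ne_zero (by simp [hc, hβ0.ne']))]
    exact tendsto_rangeTailProb_of_le_min hβ0 hβ h.ge
  · exact tendsto_rangeTailProb_of_one_sub_lt_of_le hc hα hlt hβ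

lemma tendsto_rangeTailProb_of_le_of_one_sub_le (hc : c ≠ 0) (hαβ : α ≤ β)
    (hαβ' : 1 - α ≤ β) (hβ : β ≤ 1) :
    Tendsto (rangeTailProb c α β) atTop
      (𝓝 ((1 - exp (-4 * c * α)) / (1 - exp (-4 * c * β)) +
        (1 - exp (4 * c * (1 - α))) / (1 - exp (4 * c * β)) - 1)) := by
  have hβ0 : 0 < β := by linarith
  rcases hαβ.eq_or_lt with rfl | hlt
  · rw [div_self (one_sub_exp_ne_zero (by simp [hc, hβ0.ne'])), add_sub_cancel_left]
    exact tendsto_rangeTailProb_of_one_sub_le_of_le hc hβ hβ0 hαβ' le_rfl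
  rcases hαβ'.eq_or_lt with h | hlt'
  · rw [h, div_self (one_sub_exp_ne_zero (by simp [hc, hβ0.ne'])), add_sub_cancel_right]
    exact tendsto_rangeTailProb_of_le_of_le_one_sub hc (by linarith) hβ0 hαβ h.ge
  · exact tendsto_rangeTailProb_of_lt_of_one_sub_lt hc hlt hlt' hβ

lemma limit_add_limit_sub_one (hc : c ≠ 0) (hβ : β ≠ 0) :
    (1 - exp (-4 * c * α)) / (1 - exp (-4 * c * β)) +
        (1 - exp (4 * c * (1 - α))) / (1 - exp (4 * c * β)) - 1 =
      exp (-4 * α * c) * (exp (4 * c * (1 - β)) - 1) / (1 - exp (-4 * c * β)) := by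
  have hcβ : 4 * c * β ≠ 0 := by simp [hc, hβ]
  have h1 := one_sub_exp_ne_zero hcβ
  have h2 := one_sub_exp_ne_zero (neg_ne_zero.2 hcβ)
  have h3 : exp (4 * c * β) - 1 ≠ 0 := fun h => h1 (by linarith)
  rw [show -4 * c * α = -(4 * c * α) by ring, show -4 * α * c = -(4 * c * α) by ring,
    show -4 * c * β = -(4 * c * β) by ring, mul_one_sub, mul_one_sub, exp_sub, exp_sub,
    exp_neg, exp_neg] at *
  field_simp
  ring

end RangeTailLimit

/-- Proposition 1 (weakly asymmetric case): for the walk with `p_N = 1/2 + c/N`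
started from `⌊αN⌋`, `P_{⌊αN⌋}(R_N ≥ βN)` converges to the tail of `G_{c,α}`. -/
theorem range_limit_weakly_asymmetric (c α β : ℝ) (hc : 0 < c)
    (hα0 : 0 < α) (hα1 : α < 1) (hβ0 : 0 < β) (hβ1 : β ≤ 1) :
    (β ≤ min α (1 - α) →
      Tendsto (fun N : ℕ => prob N (1/2 + c / (N : ℝ)) ⌊α * (N : ℝ)⌋
          fun w => β * (N : ℝ) ≤ (rangeCount ⌊α * (N : ℝ)⌋ w : ℝ))
        atTop (𝓝 1)) ∧
    (α ≤ β ∧ β ≤ 1 - α →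
      Tendsto (fun N : ℕ => prob N (1/2 + c / (N : ℝ)) ⌊α * (N : ℝ)⌋
          fun w => β * (N : ℝ) ≤ (rangeCount ⌊α * (N : ℝ)⌋ w : ℝ))
        atTop (𝓝 ((1 - Real.exp (-4 * c * α)) / (1 - Real.exp (-4 * c * β))))) ∧
    (1 - α ≤ β ∧ β ≤ α →
      Tendsto (fun N : ℕ => prob N (1/2 + c / (N : ℝ)) ⌊α * (N : ℝ)⌋
          fun w => β * (N : ℝ) ≤ (rangeCount ⌊α * (N : ℝ)⌋ w : ℝ))
        atTop (𝓝 ((1 - Real.exp (4 * c * (1 - α))) / (1 - Real.exp (4 * c * β))))) ∧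
    (max α (1 - α) ≤ β →
      Tendsto (fun N : ℕ => prob N (1/2 + c / (N : ℝ)) ⌊α * (N : ℝ)⌋
          fun w => β * (N : ℝ) ≤ (rangeCount ⌊α * (N : ℝ)⌋ w : ℝ))
        atTop
        (𝓝 (Real.exp (-4 * α * c) * (Real.exp (4 * c * (1 - β)) - 1) /
          (1 - Real.exp (-4 * c * β))))) := by
  refine ⟨fun h => tendsto_rangeTailProb_of_le_min hβ0 (h.trans (min_le_left _ _))
      (h.trans (min_le_right _ _)),
    fun h => tendsto_rangeTailProb_of_le_of_le_one_sub hc.ne' hα0.le hβ0 h.1 h.2,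
    fun h => tendsto_rangeTailProb_of_one_sub_le_of_le hc.ne' hα1.le hβ0 h.1 h.2,
    fun h => ?_⟩
  rw [← limit_add_limit_sub_one hc.ne' hβ0.ne']
  exact tendsto_rangeTailProb_of_le_of_one_sub_le hc.ne' ((le_max_left _ _).trans h)
    ((le_max_right _ _).trans h) hβ1
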